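/- Let m ≥ 2 and let t be an even integer with 0 < t ≤ 2^m. Let W be the set of all strings w ∈ {0,1}^{8m} whose Hamming distance from 1^{8m} lies between 4m−3 and 4m+3 inclusive. Let X = {(bin_m(i) bin_m(i)ᶜ)⁴ : 0 ≤ i < t}, let X^{⊕01} be the set obtained from X by flipping the last bit of each string, and X^{⊕10} the set obtained by flipping the second-to-last bit of each string. Then there exists a fixed-point-free involution σ of the set S = W \ (X ∪ X^{⊕01} ∪ X^{⊕10}) such that for every s ∈ S the Hamming distance between s and σ(s) is at least 2; that is, S admits a perfect matching in which no matched pair is adjacent in the hypercube Q_{8m}. -/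

import Mathlib

/-- The length-`8m` bit-string `(z z̄)⁴`: even-indexed blocks carry `z` and
odd-indexed blocks carry the bitwise complement of `z`. Here `z : ℕ → Bool`
describes a length-`m` bit-string via its first `m` values. -/
def xStr (m : ℕ) (z : ℕ → Bool) : Fin (8 * m) → Bool := fun p =>
  if ((p : ℕ) / m) % 2 = 0 then z ((p : ℕ) % m) else !(z ((p : ℕ) % m))

/-- `bin i` is the bit-string of the natural number `i` (position `o` is bit `o`). -/
def bin (i : ℕ) : ℕ → Bool := fun o => i.testBit o

/-- Flip the bit at (absolute) position `q` of a length-`N` bit-string. -/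
def flipAt (N : ℕ) (q : ℕ) (v : Fin N → Bool) : Fin N → Bool := fun i =>
  if (i : ℕ) = q then !(v i) else v i

/-- The all-ones string `1^{8m}`. -/
def rt (m : ℕ) : Fin (8 * m) → Bool := fun _ => true

/-- `W`: all strings at Hamming distance between `4m−3` and `4m+3` from `1^{8m}`. -/
def Wset (m : ℕ) : Set (Fin (8 * m) → Bool) :=
  {w | 4 * m - 3 ≤ hammingDist (rt m) w ∧ hammingDist (rt m) w ≤ 4 * m + 3}

/-- `X = {(bin_m(i) bin_m(i)ᶜ)⁴ : 0 ≤ i < t}`. -/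
def Xset (m t : ℕ) : Set (Fin (8 * m) → Bool) := {v | ∃ i < t, v = xStr m (bin i)}

/-- `X^{⊕01}`: last bit of each member of `X` flipped. -/
def Xset01 (m t : ℕ) : Set (Fin (8 * m) → Bool) :=
  {v | ∃ i < t, v = flipAt (8 * m) (8 * m - 1) (xStr m (bin i))}

/-- `X^{⊕10}`: second-to-last bit of each member of `X` flipped. -/
def Xset10 (m t : ℕ) : Set (Fin (8 * m) → Bool) :=
  {v | ∃ i < t, v = flipAt (8 * m) (8 * m - 2) (xStr m (bin i))}

/-- `S = W \ (X ∪ X^{⊕01} ∪ X^{⊕10})`. -/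
def Sset (m t : ℕ) : Set (Fin (8 * m) → Bool) :=
  Wset m \ (Xset m t ∪ Xset01 m t ∪ Xset10 m t)

/-!
Pair each `s ∈ S` with its complement `sᶜ`: since `d(1, sᶜ) = 8m - d(1, s)`, the complement stays
in `W`, and it changes all `8m` bits. This fails only when `sᶜ` lies in the removed set
`R = X ∪ X^{⊕01} ∪ X^{⊕10}`; for such `s`, flip instead the first bit of each of the eight blocks,
i.e. take `s ∆ (10^{m-1})⁸`, which changes `8` bits. That flip sends `(z zᶜ)⁴` to `(z' z'ᶜ)⁴`
with `z' = z ∆ 10^{m-1}`, so it maps `bin_m(i)` to `bin_m(i xor 1)`; as `t` is even it therefore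
permutes `R`, and it commutes with complementation. Hence `sᶜ ∈ R ↔ (s ∆ (10^{m-1})⁸)ᶜ ∈ R`, and
the rule is an involution of `S`. Finally `R ⊆ W`, because `(z zᶜ)⁴` has exactly `4m` ones.
-/

open Function Set
open scoped symmDiff

theorem commute_compl_symmDiff {β : Type*} [BooleanAlgebra β] (a : β) :
    Function.Commute compl (· ∆ a) := fun v => by
  have hcompl (x : β) : xᶜ = x ∆ ⊤ := by rw [symmDiff_top, hnot_eq_compl]
  show (v ∆ a)ᶜ = vᶜ ∆ a
  rw [hcompl, hcompl v, symmDiff_right_comm]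

section Switch

variable {α : Type*} {c f : α → α} {W R : Set α}

open scoped Classical in
noncomputable def switchMap (c f : α → α) (R : Set α) (v : α) : α :=
  if c v ∈ R then f v else c v

theorem switchMap_mapsTo (hc : Involutive c) (hf : Involutive f) (hcf : Function.Commute c f)
    (hcW : MapsTo c W W) (hRW : R ⊆ W) (hfR : MapsTo f R R) :
    MapsTo (switchMap c f R) (W \ R) (W \ R) := by
  rintro v ⟨hvW, hvR⟩
  by_cases hcv : c v ∈ R
  · rw [switchMap, if_pos hcv]
    have hcfv : c (f v) ∈ R := hcf v ▸ hfR hcv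
    refine ⟨hc (f v) ▸ hcW (hRW hcfv), fun hfv => hvR ?_⟩
    simpa only [hf v] using hfR hfv
  · rw [switchMap, if_neg hcv]
    exact ⟨hcW hvW, hcv⟩

theorem switchMap_switchMap (hc : Involutive c) (hf : Involutive f) (hcf : Function.Commute c f)
    (hfR : MapsTo f R R) {v : α} (hvR : v ∉ R) :
    switchMap c f R (switchMap c f R v) = v := by
  by_cases hcv : c v ∈ R
  · have hcfv : c (f v) ∈ R := hcf v ▸ hfR hcv
    rw [show switchMap c f R v = f v from if_pos hcv, switchMap, if_pos hcfv, hf v]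
  · rw [show switchMap c f R v = c v from if_neg hcv, switchMap, hc v, if_neg hvR]

end Switch

section HammingBool

variable {ι : Type*} [Fintype ι]

theorem hammingDist_comp_equiv (e : ι ≃ ι) (x y : ι → Bool) :
    hammingDist (x ∘ e) (y ∘ e) = hammingDist x y :=
  Finset.card_equiv e (by simp)

theorem hammingDist_compl_add_hammingDist (x y : ι → Bool) :
    hammingDist x yᶜ + hammingDist x y = Fintype.card ι := by
  classical
  have hfilter : Finset.univ.filter (fun i => x i ≠ yᶜ i) =
      Finset.univ.filter (fun i => ¬x i ≠ y i) :=
    Finset.filter_congr fun i _ => by cases hy : y i <;> simp [hy]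
  rw [hammingDist, hammingDist, hfilter, add_comm, Finset.card_filter_add_card_filter_not,
    Finset.card_univ]

theorem two_mul_hammingDist_top_of_comp_eq_compl (e : ι ≃ ι) {v : ι → Bool} (hv : v ∘ e = vᶜ) :
    2 * hammingDist ⊤ v = Fintype.card ι := by
  have hcompl : hammingDist ⊤ vᶜ = hammingDist ⊤ v := by
    rw [← hv, ← hammingDist_comp_equiv e ⊤ v]
    rfl
  rw [two_mul, ← hammingDist_compl_add_hammingDist ⊤ v, hcompl]

theorem two_le_hammingDist_symmDiff {v a : ι → Bool} {i j : ι} (hij : i ≠ j)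
    (hi : a i = true) (hj : a j = true) : 2 ≤ hammingDist v (v ∆ a) := by
  classical
  rw [← Finset.card_pair hij]
  refine Finset.card_le_card fun k hk => ?_
  simp only [Finset.mem_insert, Finset.mem_singleton] at hk
  rcases hk with rfl | rfl <;> simp [*]

end HammingBool

def Rset (m t : ℕ) : Set (Fin (8 * m) → Bool) := Xset m t ∪ Xset01 m t ∪ Xset10 m t

theorem bin_xor (i j : ℕ) : bin (i ^^^ j) = bin i ∆ bin j := by
  funext o
  simp [bin, Nat.testBit_xor]

theorem xor_one_lt_of_even {i t : ℕ} (hi : i < t) (ht : Even t) : i ^^^ 1 < t := by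
  have hdiv : (i ^^^ 1) / 2 = i / 2 := by simp [Nat.xor_div_two]
  obtain ⟨k, rfl⟩ := ht
  omega

def blockRepeat (m : ℕ) (w : ℕ → Bool) : Fin (8 * m) → Bool := fun p => w (p % m)

theorem xStr_symmDiff (m : ℕ) (z w : ℕ → Bool) :
    xStr m (z ∆ w) = xStr m z ∆ blockRepeat m w := by
  funext p
  simp only [xStr, blockRepeat, Pi.symmDiff_apply]
  split_ifs <;> cases z (p % m) <;> cases w (p % m) <;> rfl

theorem flipAt_symmDiff (N q : ℕ) (v a : Fin N → Bool) :
    flipAt N q (v ∆ a) = flipAt N q v ∆ a := by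
  funext i
  simp only [flipAt, Pi.symmDiff_apply]
  split_ifs <;> cases v i <;> cases a i <;> rfl

theorem xStr_addRight (m : ℕ) [NeZero m] (z : ℕ → Bool) :
    xStr m z ∘ Equiv.addRight ⟨m, by have := NeZero.pos m; omega⟩ = (xStr m z)ᶜ := by
  funext p
  have hm : 0 < m := NeZero.pos m
  have hval : ((p + ⟨m, by omega⟩ : Fin (8 * m)) : ℕ) = (p + m) % (8 * m) := by
    rw [Fin.val_add]
  have hmod : ((p + ⟨m, by omega⟩ : Fin (8 * m)) : ℕ) % m = p % m := by
    rw [hval, Nat.mod_mul_left_mod, Nat.add_mod_right]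
  have hblock : ((p + ⟨m, by omega⟩ : Fin (8 * m)) : ℕ) / m = (p / m + 1) % 8 := by
    rw [hval, Nat.mod_mul_left_div_self, Nat.add_div_right _ hm]
  simp only [comp_apply, Equiv.coe_addRight, Pi.compl_apply, xStr, hmod, hblock]
  split_ifs <;> first | omega | simp

theorem hammingDist_rt_xStr (m : ℕ) (z : ℕ → Bool) : hammingDist (rt m) (xStr m z) = 4 * m := by
  rcases Nat.eq_zero_or_pos m with rfl | hm
  · exact hammingDist_eq_zero.mpr (funext fun p => absurd p.isLt (by omega))
  · have : NeZero m := ⟨hm.ne'⟩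
    have h := two_mul_hammingDist_top_of_comp_eq_compl _ (xStr_addRight m z)
    rw [Fintype.card_fin] at h
    change hammingDist ⊤ (xStr m z) = 4 * m
    omega

theorem hammingDist_flipAt_le_one (N q : ℕ) (v : Fin N → Bool) :
    hammingDist v (flipAt N q v) ≤ 1 := by
  have hq : ∀ i ∈ Finset.univ.filter fun i => v i ≠ flipAt N q v i, (i : ℕ) = q := by
    intro i hi
    by_contra hne
    simp [flipAt, hne] at hi
  exact Finset.card_le_one.mpr fun a ha b hb => Fin.ext ((hq a ha).trans (hq b hb).symm)

theorem mapsTo_symmDiff_Rset (m : ℕ) {t : ℕ} (ht : Even t) :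
    MapsTo (· ∆ blockRepeat m (bin 1)) (Rset m t) (Rset m t) := by
  have hx (i : ℕ) : xStr m (bin i) ∆ blockRepeat m (bin 1) = xStr m (bin (i ^^^ 1)) := by
    rw [bin_xor, xStr_symmDiff]
  have hflip (q i : ℕ) : flipAt (8 * m) q (xStr m (bin i)) ∆ blockRepeat m (bin 1) =
      flipAt (8 * m) q (xStr m (bin (i ^^^ 1))) := by
    rw [← flipAt_symmDiff, hx]
  rintro _ ((⟨i, hi, rfl⟩ | ⟨i, hi, rfl⟩) | ⟨i, hi, rfl⟩)
  · exact Or.inl (Or.inl ⟨i ^^^ 1, xor_one_lt_of_even hi ht, hx i⟩)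
  · exact Or.inl (Or.inr ⟨i ^^^ 1, xor_one_lt_of_even hi ht, hflip _ i⟩)
  · exact Or.inr ⟨i ^^^ 1, xor_one_lt_of_even hi ht, hflip _ i⟩

theorem Rset_subset_Wset (m t : ℕ) : Rset m t ⊆ Wset m := by
  have hflip (q i : ℕ) : flipAt (8 * m) q (xStr m (bin i)) ∈ Wset m := by
    have h₁ := hammingDist_rt_xStr m (bin i)
    have h₂ := hammingDist_flipAt_le_one (8 * m) q (xStr m (bin i))
    have h₃ := hammingDist_triangle (rt m) (xStr m (bin i)) (flipAt (8 * m) q (xStr m (bin i)))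
    have h₄ := hammingDist_triangle (rt m) (flipAt (8 * m) q (xStr m (bin i))) (xStr m (bin i))
    rw [hammingDist_comm (flipAt _ _ _)] at h₄
    constructor <;> omega
  rintro _ ((⟨i, hi, rfl⟩ | ⟨i, hi, rfl⟩) | ⟨i, hi, rfl⟩)
  · have h := hammingDist_rt_xStr m (bin i)
    constructor <;> omega
  · exact hflip _ i
  · exact hflip _ i

theorem compl_mem_Wset {m : ℕ} {v : Fin (8 * m) → Bool} (hv : v ∈ Wset m) : vᶜ ∈ Wset m := by
  have h := hammingDist_compl_add_hammingDist (rt m) v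
  rw [Fintype.card_fin] at h
  obtain ⟨h₁, h₂⟩ := hv
  constructor <;> omega

noncomputable def pairing (m t : ℕ) : (Fin (8 * m) → Bool) → Fin (8 * m) → Bool :=
  switchMap compl (· ∆ blockRepeat m (bin 1)) (Rset m t)

theorem pairing_mapsTo (m : ℕ) {t : ℕ} (ht : Even t) :
    MapsTo (pairing m t) (Sset m t) (Sset m t) :=
  switchMap_mapsTo compl_involutive (symmDiff_left_involutive _) (commute_compl_symmDiff _)
    (fun _ => compl_mem_Wset) (Rset_subset_Wset m t) (mapsTo_symmDiff_Rset m ht)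

theorem pairing_pairing (m : ℕ) {t : ℕ} (ht : Even t) {v : Fin (8 * m) → Bool}
    (hv : v ∈ Sset m t) : pairing m t (pairing m t v) = v :=
  switchMap_switchMap compl_involutive (symmDiff_left_involutive _) (commute_compl_symmDiff _)
    (mapsTo_symmDiff_Rset m ht) hv.2

theorem two_le_hammingDist_pairing {m : ℕ} (hm : 0 < m) (t : ℕ) (v : Fin (8 * m) → Bool) :
    2 ≤ hammingDist v (pairing m t v) := by
  unfold pairing switchMap
  split_ifs
  · refine two_le_hammingDist_symmDiff (i := ⟨0, by omega⟩) (j := ⟨m, by omega⟩) ?_ ?_ ?_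
    · simp only [ne_eq, Fin.mk.injEq]; omega
    · simp [blockRepeat, bin]
    · simp [blockRepeat, bin]
  · have h := hammingDist_compl_add_hammingDist v v
    rw [hammingDist_self, Fintype.card_fin] at h
    omega

theorem stmt16_general (m : ℕ) (hm : 2 ≤ m) (t : ℕ) (hte : Even t) :
    ∃ σ : (Sset m t) → (Sset m t), Function.Involutive σ ∧
      ∀ s : Sset m t, σ s ≠ s ∧
        2 ≤ hammingDist ((s : Fin (8 * m) → Bool)) ((σ s : Fin (8 * m) → Bool)) := by
  refine ⟨(pairing_mapsTo m hte).restrict, fun s => Subtype.ext (pairing_pairing m hte s.2),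
    fun s => ?_⟩
  have hdist : 2 ≤ hammingDist (s : Fin (8 * m) → Bool) (pairing m t s) :=
    two_le_hammingDist_pairing (zero_lt_two.trans_le hm) t s
  refine ⟨fun hfix => ?_, hdist⟩
  rw [show pairing m t s = s from congrArg Subtype.val hfix, hammingDist_self] at hdist
  omega

/-- For `m ≥ 2` and even `0 < t ≤ 2^m`, the set
`S = W \ (X ∪ X^{⊕01} ∪ X^{⊕10})` admits a fixed-point-free involution `σ` with
`hammingDist s (σ s) ≥ 2` for all `s ∈ S`; i.e. a perfect matching of `S` in which no
matched pair is adjacent in the hypercube `Q_{8m}`. -/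
theorem stmt16 (m : ℕ) (hm : 2 ≤ m) (t : ℕ) (ht0 : 0 < t) (ht : t ≤ 2 ^ m)
    (hte : Even t) :
    ∃ σ : (Sset m t) → (Sset m t), Function.Involutive σ ∧
      ∀ s : Sset m t, σ s ≠ s ∧
        2 ≤ hammingDist ((s : Fin (8 * m) → Bool)) ((σ s : Fin (8 * m) → Bool)) :=
  stmt16_general m hm t hte
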